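/- arXiv:1505.06080 — 3 statements merged into one kernel-verified Lean document; each statement's English description precedes it below -/
import Mathlib

section
/- For every positive integer d, every s ≥ 0 and every μ ∈ ℂ with Re(μ) < d, the function t ↦ e^{−s·coth(t) + μ·t}/sinh(t)^d is (Lebesgue) integrable on the interval (h, ∞), and for each fixed s ≥ 0 the function μ ↦ I∞(μ,s) = ∫_h^∞ e^{−s·coth(t) + μ·t}/sinh(t)^d dt is holomorphic on the half-plane {μ ∈ ℂ : Re(μ) < d}. -/
open MeasureTheory

noncomputable def hconst : ℝ := (1/2) * Real.log (5/3)

noncomputable def cothR (t : ℝ) : ℝ := Real.cosh t / Real.sinh t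

noncomputable def Iinf (d : ℕ) (μ : ℂ) (s : ℝ) : ℂ :=
  ∫ t in Set.Ioi hconst,
    Complex.exp (-(s:ℂ) * (cothR t : ℂ) + μ * (t:ℂ)) / ((Real.sinh t : ℂ))^d

/-!
Write the integrand as `w(t) e^{μt}` with the positive weight `w(t) = e^{-s coth t} / sinh(t)^d`.
Then `I∞(·, s)` is the complex moment generating function of the measure `w(t) dt` on `(h, ∞)`,
which is holomorphic on the interior of its strip of convergence. Since `coth t ≥ 0` and
`sinh t ≥ c e^t` on `(h, ∞)`, the weight is `O(e^{-dt})`, so that strip contains `Re μ < d`.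
-/

open Real Set ProbabilityTheory
open scoped Complex

section WeightedLaplace

variable {a b C : ℝ} {w : ℝ → ℝ}

noncomputable def weightedMeasure (a : ℝ) (w : ℝ → ℝ) : Measure ℝ :=
  (volume.restrict (Ioi a)).withDensity fun t => ENNReal.ofReal (w t)

variable (hw : AEMeasurable w (volume.restrict (Ioi a))) (hw0 : ∀ t ∈ Ioi a, 0 ≤ w t)
include hw hw0

lemma integrableOn_mul_exp_of_le_exp (hwb : ∀ t ∈ Ioi a, w t ≤ C * rexp (-b * t))
    {r : ℝ} (hr : r < b) : IntegrableOn (fun t => w t * rexp (r * t)) (Ioi a) := by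
  refine ((exp_neg_integrableOn_Ioi a (sub_pos.2 hr)).const_mul C).mono'
    (hw.aestronglyMeasurable.mul
      (by fun_prop : Continuous fun t => rexp (r * t)).aestronglyMeasurable) ?_
  filter_upwards [ae_restrict_mem measurableSet_Ioi] with t ht
  rw [norm_mul, norm_of_nonneg (hw0 t ht), norm_of_nonneg (exp_nonneg _)]
  calc w t * rexp (r * t) ≤ C * rexp (-b * t) * rexp (r * t) := by gcongr; exact hwb t ht
    _ = C * rexp (-(b - r) * t) := by rw [mul_assoc, ← exp_add]; ring_nf

lemma integrableOn_smul_cexp_mul_of_le_exp (hwb : ∀ t ∈ Ioi a, w t ≤ C * rexp (-b * t))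
    {z : ℂ} (hz : z.re < b) : IntegrableOn (fun t : ℝ => w t • cexp (z * t)) (Ioi a) := by
  refine (integrableOn_mul_exp_of_le_exp hw hw0 hwb hz).mono'
    (hw.aestronglyMeasurable.smul
      (by fun_prop : Continuous fun t : ℝ => cexp (z * t)).aestronglyMeasurable) ?_
  filter_upwards [ae_restrict_mem measurableSet_Ioi] with t ht
  simp [Complex.norm_exp, abs_of_nonneg (hw0 t ht)]

lemma setIntegral_smul_cexp_mul_eq_complexMGF (z : ℂ) :
    ∫ t in Ioi a, w t • cexp (z * t) = complexMGF id (weightedMeasure a w) z := by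
  rw [complexMGF, weightedMeasure, integral_withDensity_eq_integral_toReal_smul₀ hw.ennreal_ofReal
    (ae_of_all _ fun _ => ENNReal.ofReal_lt_top)]
  refine setIntegral_congr_fun measurableSet_Ioi fun t ht => ?_
  simp [ENNReal.toReal_ofReal (hw0 t ht)]

lemma Iio_subset_integrableExpSet (hwb : ∀ t ∈ Ioi a, w t ≤ C * rexp (-b * t)) :
    Iio b ⊆ integrableExpSet id (weightedMeasure a w) := by
  intro r hr
  rw [integrableExpSet, mem_ofPred_eq, weightedMeasure, integrable_withDensity_iff_integrable_smul₀'
    hw.ennreal_ofReal (ae_of_all _ fun _ => ENNReal.ofReal_lt_top)]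
  refine (integrableOn_mul_exp_of_le_exp hw hw0 hwb hr).congr_fun (fun t ht => ?_) measurableSet_Ioi
  simp [ENNReal.toReal_ofReal (hw0 t ht)]

theorem differentiableOn_setIntegral_smul_cexp_mul
    (hwb : ∀ t ∈ Ioi a, w t ≤ C * rexp (-b * t)) :
    DifferentiableOn ℂ (fun z : ℂ => ∫ t in Ioi a, w t • cexp (z * t)) {z | z.re < b} := by
  simp_rw [setIntegral_smul_cexp_mul_eq_complexMGF hw hw0]
  exact differentiableOn_complexMGF.mono fun z hz =>
    interior_maximal (Iio_subset_integrableExpSet hw hw0 hwb) isOpen_Iio hz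

end WeightedLaplace

lemma mul_exp_le_sinh {a t : ℝ} (h : a ≤ t) : (1 - rexp (-2 * a)) / 2 * rexp t ≤ sinh t := by
  have : rexp (-t) ≤ rexp (-2 * a) * rexp t := by rw [← exp_add]; gcongr; linarith
  rw [sinh_eq]; linarith

noncomputable def cothWeight (d : ℕ) (s t : ℝ) : ℝ := rexp (-s * cothR t) / sinh t ^ d

lemma cexp_div_sinh_pow_eq_cothWeight_smul (d : ℕ) (s : ℝ) (μ : ℂ) (t : ℝ) :
    cexp (-(s:ℂ) * (cothR t : ℂ) + μ * (t:ℂ)) / ((sinh t : ℂ))^d =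
      cothWeight d s t • cexp (μ * t) := by
  rw [cothWeight, Complex.real_smul, Complex.exp_add]
  push_cast
  ring

lemma measurable_cothWeight (d : ℕ) (s : ℝ) : Measurable (cothWeight d s) := by
  unfold cothWeight cothR; fun_prop

lemma cothWeight_nonneg (d : ℕ) {s t : ℝ} (ht : 0 < t) : 0 ≤ cothWeight d s t :=
  div_nonneg (exp_nonneg _) (pow_nonneg (sinh_pos_iff.2 ht).le d)

lemma cothWeight_le (d : ℕ) {s a t : ℝ} (hs : 0 ≤ s) (ha : 0 < a) (ht : a ≤ t) :
    cothWeight d s t ≤ ((1 - rexp (-2 * a)) / 2)⁻¹ ^ d * rexp (-d * t) := by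
  have hK : 0 < (1 - rexp (-2 * a)) / 2 := by
    have : rexp (-2 * a) < 1 := exp_lt_one_iff.2 (by linarith)
    linarith
  have hcoth : 0 ≤ cothR t := div_nonneg (cosh_pos t).le (sinh_pos_iff.2 (ha.trans_le ht)).le
  calc cothWeight d s t ≤ 1 / ((1 - rexp (-2 * a)) / 2 * rexp t) ^ d := by
        unfold cothWeight
        gcongr
        · exact exp_le_one_iff.2 (mul_nonpos_of_nonpos_of_nonneg (neg_nonpos.2 hs) hcoth)
        · exact mul_exp_le_sinh ht
    _ = ((1 - rexp (-2 * a)) / 2)⁻¹ ^ d * rexp (-d * t) := by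
        rw [one_div, mul_pow, mul_inv, inv_pow, ← exp_nat_mul, ← exp_neg, ← neg_mul]

lemma hconst_pos : 0 < hconst := by
  unfold hconst; have := log_pos (by norm_num : (1:ℝ) < 5/3); positivity

theorem stmt1_general (d : ℕ) (s : ℝ) (hs : 0 ≤ s) :
    (∀ μ : ℂ, μ.re < (d : ℝ) → IntegrableOn
      (fun t : ℝ => Complex.exp (-(s:ℂ) * (cothR t : ℂ) + μ * (t:ℂ)) / ((Real.sinh t : ℂ))^d)
      (Set.Ioi hconst)) ∧
    DifferentiableOn ℂ (fun μ : ℂ => Iinf d μ s) {μ : ℂ | μ.re < (d : ℝ)} := by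
  have hw := (measurable_cothWeight d s).aemeasurable (μ := volume.restrict (Ioi hconst))
  have hw0 : ∀ t ∈ Ioi hconst, 0 ≤ cothWeight d s t :=
    fun t ht => cothWeight_nonneg d (hconst_pos.trans ht)
  have hwb : ∀ t ∈ Ioi hconst, cothWeight d s t ≤ _ * rexp (-d * t) :=
    fun t ht => cothWeight_le d hs hconst_pos (le_of_lt ht)
  simp only [Iinf, cexp_div_sinh_pow_eq_cothWeight_smul]
  exact ⟨fun μ hμ => integrableOn_smul_cexp_mul_of_le_exp hw hw0 hwb hμ,
    differentiableOn_setIntegral_smul_cexp_mul hw hw0 hwb⟩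

theorem stmt1 (d : ℕ) (hd : 0 < d) (s : ℝ) (hs : 0 ≤ s) :
    (∀ μ : ℂ, μ.re < (d : ℝ) → IntegrableOn
      (fun t : ℝ => Complex.exp (-(s:ℂ) * (cothR t : ℂ) + μ * (t:ℂ)) / ((Real.sinh t : ℂ))^d)
      (Set.Ioi hconst)) ∧
    DifferentiableOn ℂ (fun μ : ℂ => Iinf d μ s) {μ : ℂ | μ.re < (d : ℝ)} :=
  stmt1_general d s hs
end

section
/- Let q ≥ 1 be an integer, b > 0, t ∈ [0,1) and C > 0, and let (τ_n)_{n∈ℕ} be a real sequence with |τ_n| ≤ C·(1+n)^t for all n. Then the set of natural numbers n such that L^n_{q−1}(b/2) ≠ 0 and (n − b/2 − τ_n)·L^n_{q−1}(b/2) + b·(L^n_{q−1})'(b/2) = 0 is finite. -/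
/-! Write `x = b/2` and `m = q - 1`. At the origin `L^n_m(0) = C(m+n, m) ≥ (n+1)^m / m!`, while
`(L^n_m)' = -L^{n+1}_{m-1}` is `O(n^{m-1})` uniformly on `[0, x]`. By the mean value theorem
`L^n_m(x) / C(m+n, m) → 1` and `(L^n_m)'(x) / C(m+n, m) → 0`. Since `τ_n = o(n)`, the
left-hand side of the equation divided by `(n+1) C(m+n, m)` tends to `1`, so it vanishes only
finitely often. -/

/-- The generalized Laguerre polynomial
`L^n_{q-1}(x) = Σ_{i=0}^{q-1} C(q-1+n, q-1-i) (-x)^i / i!`. -/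
noncomputable def lagPoly (q n : ℕ) (x : ℝ) : ℝ :=
  ∑ i ∈ Finset.range q, (Nat.choose (q - 1 + n) (q - 1 - i) : ℝ) * (-x)^i / (Nat.factorial i : ℝ)

open Finset Filter Topology Nat

theorem choose_pred_add_le_pow {q n i : ℕ} (hi : i < q) :
    (q - 1 + n).choose (q - 1 - i) ≤ (q + n) ^ (q - 1) :=
  calc (q - 1 + n).choose (q - 1 - i) ≤ (q - 1 + n) ^ (q - 1 - i) := choose_le_pow _ _
    _ ≤ (q + n) ^ (q - 1 - i) := Nat.pow_le_pow_left (by omega) _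
    _ ≤ (q + n) ^ (q - 1) := Nat.pow_le_pow_right (by omega) (by omega)

/-- The factor `q` matters: for `q = 0` the bound must be `0`, not `exp |x|`, to be `o(1)`. -/
theorem abs_lagPoly_le (q n : ℕ) (x : ℝ) :
    |lagPoly q n x| ≤ q * ((q + n : ℕ) : ℝ) ^ (q - 1) * Real.exp |x| :=
  calc |lagPoly q n x|
      ≤ ∑ i ∈ range q, |((q - 1 + n).choose (q - 1 - i) : ℝ) * (-x) ^ i / (i ! : ℝ)| :=
        abs_sum_le_sum_abs _ _
    _ ≤ ∑ _i ∈ range q, ((q + n : ℕ) : ℝ) ^ (q - 1) * Real.exp |x| := by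
        refine sum_le_sum fun i hi => ?_
        rw [abs_div, abs_mul, abs_pow, abs_neg, Nat.abs_cast, Nat.abs_cast, mul_div_assoc]
        gcongr
        · exact_mod_cast choose_pred_add_le_pow (mem_range.mp hi)
        · exact Real.pow_div_factorial_le_exp |x| (abs_nonneg x) i
    _ = _ := by rw [sum_const, card_range, nsmul_eq_mul, mul_assoc]

theorem lagPoly_succ (m n : ℕ) (x : ℝ) :
    lagPoly (m + 1) n x = (m + n).choose m +
      ∑ i ∈ range m, ((m + n).choose (m - 1 - i) : ℝ) * ((-x) ^ (i + 1) / ((i + 1) ! : ℝ)) := by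
  rw [lagPoly, sum_range_succ', add_comm]
  congr 1
  · simp
  · refine sum_congr rfl fun i _ => ?_
    rw [Nat.add_sub_cancel, Nat.sub_sub, add_comm 1 i, mul_div_assoc]

theorem lagPoly_succ_zero (m n : ℕ) : lagPoly (m + 1) n 0 = (m + n).choose m := by
  simp [lagPoly_succ]

theorem hasDerivAt_lagPoly_succ (m n : ℕ) (x : ℝ) :
    HasDerivAt (lagPoly (m + 1) n) (-lagPoly m (n + 1) x) x := by
  have hterm (i : ℕ) : HasDerivAt (fun y : ℝ => (-y) ^ (i + 1) / ((i + 1) ! : ℝ))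
      (-((-x) ^ i / (i ! : ℝ))) x := by
    refine (((hasDerivAt_neg x).pow (i + 1)).div_const ((i + 1) ! : ℝ)).congr_deriv ?_
    rw [Nat.factorial_succ]
    push_cast
    field_simp
  have hsum := (HasDerivAt.fun_sum fun i (_ : i ∈ range m) =>
    (hterm i).const_mul ((m + n).choose (m - 1 - i) : ℝ)).const_add ((m + n).choose m : ℝ)
  rw [show lagPoly (m + 1) n = _ from funext (lagPoly_succ m n)]
  refine hsum.congr_deriv ?_
  rw [lagPoly, ← sum_neg_distrib]
  refine sum_congr rfl fun i hi => ?_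
  rw [show m - 1 + (n + 1) = m + n by have := mem_range.mp hi; omega]
  ring

theorem abs_lagPoly_succ_sub_choose_le (m n : ℕ) {x : ℝ} (hx : 0 ≤ x) :
    |lagPoly (m + 1) n x - (m + n).choose m| ≤
      m * ((m + n + 1 : ℕ) : ℝ) ^ (m - 1) * (Real.exp x * x) := by
  have hbound (y : ℝ) (hy : y ∈ Set.Ico 0 x) :
      ‖-lagPoly m (n + 1) y‖ ≤ m * ((m + n + 1 : ℕ) : ℝ) ^ (m - 1) * Real.exp x := by
    rw [norm_neg, Real.norm_eq_abs]
    refine (abs_lagPoly_le m (n + 1) y).trans ?_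
    rw [abs_of_nonneg hy.1]
    gcongr _ * Real.exp ?_
    exact hy.2.le
  simpa [lagPoly_succ_zero, mul_assoc] using norm_image_sub_le_of_norm_deriv_le_segment'
    (fun y _ => (hasDerivAt_lagPoly_succ m n y).hasDerivWithinAt) hbound x ⟨hx, le_rfl⟩

theorem tendsto_mul_pow_div_choose (m : ℕ) :
    Tendsto (fun n : ℕ => m * ((m + n + 1 : ℕ) : ℝ) ^ (m - 1) / (m + n).choose m)
      atTop (𝓝 0) := by
  have hchoose (n : ℕ) : ((n : ℝ) + 1) ^ m ≤ m ! * (m + n).choose m := by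
    rw [← div_le_iff₀' (by positivity)]
    simpa [show m + n + 1 - m = n + 1 by omega] using pow_le_choose (α := ℝ) m (m + n)
  have hpow (n : ℕ) : (m : ℝ) * ((m + n + 1 : ℕ) : ℝ) ^ (m - 1) * (n + 1) ≤
      m * (m + 1) ^ (m - 1) * (n + 1) ^ m := by
    rcases m with _ | m
    · simp
    · have : ((m + 1 + n + 1 : ℕ) : ℝ) ≤ (m + 1 + 1) * (n + 1) := by push_cast; nlinarith
      calc ((m + 1 : ℕ) : ℝ) * ((m + 1 + n + 1 : ℕ) : ℝ) ^ m * (n + 1)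
          ≤ (m + 1 : ℕ) * ((m + 1 + 1) * (n + 1)) ^ m * (n + 1) := by gcongr
        _ = _ := by rw [mul_pow]; push_cast; ring
  refine squeeze_zero (fun n => by positivity) (fun n => ?_)
    (by simpa using tendsto_one_div_add_atTop_nhds_zero_nat.const_mul
          ((m : ℝ) * (m + 1) ^ (m - 1) * (m ! : ℝ)))
  rw [div_le_iff₀ (by exact_mod_cast choose_pos (by omega))]
  calc (m : ℝ) * ((m + n + 1 : ℕ) : ℝ) ^ (m - 1)
      ≤ m * (m + 1) ^ (m - 1) * (n + 1) ^ m / (n + 1) := by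
        rw [le_div_iff₀ (by positivity)]
        exact hpow n
    _ ≤ m * (m + 1) ^ (m - 1) * (m ! * (m + n).choose m) / (n + 1) := by
        gcongr
        exact hchoose n
    _ = _ := by ring

theorem tendsto_lagPoly_succ_div_choose (m : ℕ) {x : ℝ} (hx : 0 ≤ x) :
    Tendsto (fun n : ℕ => lagPoly (m + 1) n x / (m + n).choose m) atTop (𝓝 1) := by
  rw [tendsto_iff_norm_sub_tendsto_zero]
  refine squeeze_zero_norm (fun n => ?_)
    (zero_mul (Real.exp x * x) ▸ (tendsto_mul_pow_div_choose m).mul_const (Real.exp x * x))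
  have hD : (0 : ℝ) < (m + n).choose m := by exact_mod_cast choose_pos (by omega)
  rw [norm_norm, Real.norm_eq_abs, div_sub_one hD.ne', abs_div, abs_of_pos hD, div_mul_eq_mul_div]
  gcongr
  exact abs_lagPoly_succ_sub_choose_le m n hx

theorem tendsto_deriv_lagPoly_succ_div_choose (m : ℕ) (x : ℝ) :
    Tendsto (fun n : ℕ => deriv (lagPoly (m + 1) n) x / (m + n).choose m) atTop (𝓝 0) := by
  refine squeeze_zero_norm (fun n => ?_)
    (zero_mul (Real.exp |x|) ▸ (tendsto_mul_pow_div_choose m).mul_const (Real.exp |x|))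
  rw [(hasDerivAt_lagPoly_succ m n x).deriv, Real.norm_eq_abs, abs_div, abs_neg, Nat.abs_cast,
    div_mul_eq_mul_div]
  gcongr
  exact abs_lagPoly_le m (n + 1) x

theorem tendsto_natCast_sub_sub_div_of_abs_le_rpow (a : ℝ) {τ : ℕ → ℝ} {C t : ℝ} (ht : t < 1)
    (hτ : ∀ n : ℕ, |τ n| ≤ C * (1 + (n : ℝ)) ^ t) :
    Tendsto (fun n : ℕ => ((n : ℝ) - a - τ n) / (n + 1)) atTop (𝓝 1) := by
  have hrpow : Tendsto (fun n : ℕ => (1 + (n : ℝ)) ^ (t - 1)) atTop (𝓝 0) := by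
    simpa [Function.comp_def, neg_sub] using (tendsto_rpow_neg_atTop (by linarith : 0 < 1 - t)).comp
      (tendsto_atTop_add_const_left _ 1 tendsto_natCast_atTop_atTop)
  have hτ' : Tendsto (fun n : ℕ => τ n / (n + 1)) atTop (𝓝 0) := by
    refine squeeze_zero_norm (fun n => ?_) (by simpa using hrpow.const_mul C)
    have hn : (0 : ℝ) < 1 + n := by positivity
    rw [Real.norm_eq_abs, abs_div, abs_of_pos (by positivity : (0 : ℝ) < n + 1), add_comm (n : ℝ),
      Real.rpow_sub_one hn.ne', mul_div_assoc']
    exact div_le_div_of_nonneg_right (hτ n) hn.le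
  have hlim := (tendsto_const_nhds (x := (1 : ℝ))).sub
    ((tendsto_one_div_add_atTop_nhds_zero_nat.const_mul (1 + a)).add hτ')
  convert hlim using 1
  · funext n
    field_simp
    ring
  · simp

theorem stmt14_general (q : ℕ) (hq : 1 ≤ q) (b : ℝ) (hb : 0 < b)
    (t : ℝ) (ht1 : t < 1)
    (C : ℝ) (τ : ℕ → ℝ) (hτ : ∀ n : ℕ, |τ n| ≤ C * (1 + (n:ℝ)) ^ t) :
    {n : ℕ | lagPoly q n (b/2) ≠ 0 ∧
      ((n:ℝ) - b/2 - τ n) * lagPoly q n (b/2) + b * deriv (lagPoly q n) (b/2) = 0}.Finite := by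
  obtain ⟨m, rfl⟩ := Nat.exists_eq_add_of_le' hq
  have hlim : Tendsto (fun n : ℕ =>
      (((n : ℝ) - b / 2 - τ n) * lagPoly (m + 1) n (b / 2) +
          b * deriv (lagPoly (m + 1) n) (b / 2)) / ((n + 1) * (m + n).choose m)) atTop (𝓝 1) := by
    have h := ((tendsto_natCast_sub_sub_div_of_abs_le_rpow (b / 2) ht1 hτ).mul
      (tendsto_lagPoly_succ_div_choose m (by positivity : 0 ≤ b / 2))).add
      ((tendsto_one_div_add_atTop_nhds_zero_nat.const_mul b).mul
        (tendsto_deriv_lagPoly_succ_div_choose m (b / 2)))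
    convert h using 1
    · funext n
      simp only [div_eq_mul_inv, mul_inv]
      ring
    · simp
  have hev := hlim.eventually_ne one_ne_zero
  rw [← Nat.cofinite_eq_atTop] at hev
  refine (eventually_cofinite.mp hev).subset fun n hn => ?_
  simp [hn.2]

theorem stmt14 (q : ℕ) (hq : 1 ≤ q) (b : ℝ) (hb : 0 < b)
    (t : ℝ) (ht0 : 0 ≤ t) (ht1 : t < 1)
    (C : ℝ) (hC : 0 < C) (τ : ℕ → ℝ) (hτ : ∀ n : ℕ, |τ n| ≤ C * (1 + (n:ℝ)) ^ t) :
    {n : ℕ | lagPoly q n (b/2) ≠ 0 ∧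
      ((n:ℝ) - b/2 - τ n) * lagPoly q n (b/2) + b * deriv (lagPoly q n) (b/2) = 0}.Finite :=
  stmt14_general q hq b hb t ht1 C τ hτ
end

section
/- Let p ≥ 1 be an integer, r > 0, and let f be holomorphic on the open disc {z ∈ ℂ : |z| < r}, with Taylor expansion f(z) = Σ_{j≥0} β_j·z^j. Suppose that f(x) ∈ ℝ and f(x·e^{iπ/p}) ∈ ℝ for every real x ∈ (0, r). Then β_j = 0 for every j ∈ ℕ that is not divisible by p. -/
/-!
Expanding `f (x * c)` for a unit `c` gives a power series in `x` with coefficients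
`β j * c ^ j`. If it is real on `(0, r)`, then `z ↦ f (z * c) - conj (f (conj z * c))` is a power
series vanishing on `(0, r)`, so by the isolated zeros principle every `β j * c ^ j` is real.
Applied to `c = 1` and to `c = ω = exp (π i / p)`, a primitive `2p`-th root of unity, this makes
`ω ^ j` real whenever `β j ≠ 0`; a real number of modulus one squares to one, so `ω ^ (2j) = 1`
and `2p ∣ 2j`.
-/

open Complex Filter Topology
open scoped Real ComplexConjugate

section PowerSeries

variable {𝕜 : Type*} [NontriviallyNormedField 𝕜] {γ : ℕ → 𝕜} {g : 𝕜 → 𝕜} {r : ℝ}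

lemma hasFPowerSeriesAt_ofScalars_of_hasSum (hr : 0 < r)
    (hsum : ∀ z ∈ Metric.ball (0 : 𝕜) r, HasSum (fun j => γ j * z ^ j) (g z)) :
    HasFPowerSeriesAt g (FormalMultilinearSeries.ofScalars 𝕜 γ) 0 := by
  obtain ⟨x, hx₀, hxr⟩ := NormedField.exists_norm_lt 𝕜 hr
  have hx : x ∈ Metric.ball (0 : 𝕜) r := by simpa using hxr
  refine ⟨‖x‖₊, ⟨?_, by simpa using hx₀, fun {y} hy => ?_⟩⟩
  · refine FormalMultilinearSeries.le_radius_of_tendsto _ (l := 0) ?_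
    simpa [FormalMultilinearSeries.ofScalars_norm] using
      (hsum x hx).summable.tendsto_atTop_zero.norm
  · have hyx : ‖y‖ < ‖x‖ := by simpa using hy
    simpa [FormalMultilinearSeries.ofScalars_apply_eq, mul_comm] using
      hsum y (mem_ball_zero_iff.mpr (hyx.trans hxr))

lemma eq_zero_of_hasSum_of_frequently_eq_zero (hr : 0 < r)
    (hsum : ∀ z ∈ Metric.ball (0 : 𝕜) r, HasSum (fun j => γ j * z ^ j) (g z))
    (hzero : ∃ᶠ z in 𝓝[≠] 0, g z = 0) : γ = 0 := by
  by_contra hγ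
  refine hzero ((hasFPowerSeriesAt_ofScalars_of_hasSum hr hsum).locally_ne_zero ?_)
  rwa [Ne, FormalMultilinearSeries.ofScalars_series_eq_zero]

end PowerSeries

lemma frequently_nhdsNE_zero_of_forall_Ioo {P : ℂ → Prop} {r : ℝ} (hr : 0 < r)
    (hP : ∀ x : ℝ, 0 < x → x < r → P x) : ∃ᶠ z in 𝓝[≠] (0 : ℂ), P z := by
  have hmap : Tendsto ((↑) : ℝ → ℂ) (𝓝[>] 0) (𝓝[≠] 0) := by
    refine tendsto_nhdsWithin_of_tendsto_nhds_of_eventually_within _ ?_ ?_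
    · simpa using (continuous_ofReal.tendsto 0).mono_left nhdsWithin_le_nhds
    · filter_upwards [self_mem_nhdsWithin] with x hx using ofReal_ne_zero.mpr (ne_of_gt hx)
  refine hmap.frequently (Eventually.frequently ?_)
  filter_upwards [Ioo_mem_nhdsGT hr] with x hx using hP x hx.1 hx.2

lemma conj_coeff_eq_of_im_eq_zero {r : ℝ} (hr : 0 < r) {a : ℕ → ℂ} {h : ℂ → ℂ}
    (hsum : ∀ z ∈ Metric.ball (0 : ℂ) r, HasSum (fun j => a j * z ^ j) (h z))
    (hreal : ∀ x : ℝ, 0 < x → x < r → (h x).im = 0) (j : ℕ) : conj (a j) = a j := by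
  have hreflect : ∀ z ∈ Metric.ball (0 : ℂ) r,
      HasSum (fun j => (a j - conj (a j)) * z ^ j) (h z - conj (h (conj z))) := by
    intro z hz
    have hconj := (hsum (conj z) (by simpa using hz)).mapL conjCLE.toContinuousLinearMap
    simpa [sub_mul] using (hsum z hz).sub hconj
  have hzero := eq_zero_of_hasSum_of_frequently_eq_zero hr hreflect <|
    frequently_nhdsNE_zero_of_forall_Ioo hr fun x hx hxr => by
      simp [conj_eq_iff_im.mpr (hreal x hx hxr)]
  exact (sub_eq_zero.mp (congrFun hzero j)).symm

lemma hasSum_comp_mul_of_norm_le_one {r : ℝ} {β : ℕ → ℂ} {f : ℂ → ℂ}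
    (hsum : ∀ z ∈ Metric.ball (0 : ℂ) r, HasSum (fun j => β j * z ^ j) (f z))
    {c : ℂ} (hc : ‖c‖ ≤ 1) :
    ∀ z ∈ Metric.ball (0 : ℂ) r, HasSum (fun j => β j * c ^ j * z ^ j) (f (z * c)) := by
  intro z hz
  have hzc : ‖z * c‖ < r := by
    rw [norm_mul]
    exact (mul_le_of_le_one_right (norm_nonneg z) hc).trans_lt (mem_ball_zero_iff.mp hz)
  convert hsum (z * c) (mem_ball_zero_iff.mpr hzc) using 2 with j
  ring

lemma isPrimitiveRoot_exp_pi_mul_I_div {p : ℕ} (hp : p ≠ 0) :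
    IsPrimitiveRoot (exp (π * I / p)) (2 * p) := by
  convert isPrimitiveRoot_exp (2 * p) (by omega) using 2
  push_cast
  field_simp

lemma sq_eq_one_of_conj_eq {z : ℂ} (hz : ‖z‖ = 1) (h : conj z = z) : z ^ 2 = 1 := by
  rw [sq]
  nth_rw 2 [← h]
  rw [mul_conj', hz, ofReal_one, one_pow]

theorem stmt16_general (p : ℕ) (hp : 1 ≤ p) (r : ℝ) (hr : 0 < r) (f : ℂ → ℂ) (β : ℕ → ℂ)
    (hsum : ∀ z ∈ Metric.ball (0:ℂ) r, HasSum (fun j : ℕ => β j * z^j) (f z))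
    (hreal₁ : ∀ x : ℝ, 0 < x → x < r → (f (x : ℂ)).im = 0)
    (hreal₂ : ∀ x : ℝ, 0 < x → x < r →
      (f ((x : ℂ) * Complex.exp (Real.pi * Complex.I / (p : ℂ)))).im = 0) :
    ∀ j : ℕ, ¬ (p ∣ j) → β j = 0 := by
  intro j hj
  set ω := exp (π * I / p)
  have hω := isPrimitiveRoot_exp_pi_mul_I_div (p := p) (by omega)
  have hωnorm : ‖ω‖ = 1 := hω.norm'_eq_one (by omega)
  have hβ := conj_coeff_eq_of_im_eq_zero hr hsum hreal₁ j
  have hβω := conj_coeff_eq_of_im_eq_zero hr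
    (hasSum_comp_mul_of_norm_le_one hsum hωnorm.le) hreal₂ j
  by_contra hβ0
  rw [map_mul, hβ] at hβω
  have hωj := sq_eq_one_of_conj_eq (by rw [norm_pow, hωnorm, one_pow]) (mul_left_cancel₀ hβ0 hβω)
  rw [← pow_mul, hω.pow_eq_one_iff_dvd, mul_comm j] at hωj
  exact hj (Nat.dvd_of_mul_dvd_mul_left two_pos hωj)

theorem stmt16 (p : ℕ) (hp : 1 ≤ p) (r : ℝ) (hr : 0 < r) (f : ℂ → ℂ) (β : ℕ → ℂ)
    (hf : DifferentiableOn ℂ f (Metric.ball (0:ℂ) r))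
    (hsum : ∀ z ∈ Metric.ball (0:ℂ) r, HasSum (fun j : ℕ => β j * z^j) (f z))
    (hreal₁ : ∀ x : ℝ, 0 < x → x < r → (f (x : ℂ)).im = 0)
    (hreal₂ : ∀ x : ℝ, 0 < x → x < r →
      (f ((x : ℂ) * Complex.exp (Real.pi * Complex.I / (p : ℂ)))).im = 0) :
    ∀ j : ℕ, ¬ (p ∣ j) → β j = 0 :=
  stmt16_general p hp r hr f β hsum hreal₁ hreal₂
end
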